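/- For all 1 ≤ p, q < ∞ the unit spheres S(ℓ_p) and S(ℓ_q) are uniformly homeomorphic: there exists a bijection F : S(ℓ_p) → S(ℓ_q) such that both F and F^{-1} are uniformly continuous. -/

import Mathlib

/-!
For `p, q` finite the Mazur map `M x = (sign xᵢ |xᵢ| ^ (p / q))ᵢ` sends `S(ℓ_p)` onto `S(ℓ_q)`,
with inverse the Mazur map for `q / p`. If `p ≤ q` the scalar map `t ↦ sign t |t| ^ (p / q)` is
`(p / q)`-Hölder, so `‖M x - M y‖_q ≤ 2 ‖x - y‖_p ^ (p / q)`. If `p > q`, put `s = p / q`: the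
mean value bound `|aˢ - bˢ| ≤ s |a - b| max(|a|, |b|)ˢ⁻¹` together with Hölder's inequality for
`1 / q = 1 / p + (1 / q - 1 / p)` makes `M` Lipschitz on the unit sphere.
-/

open scoped ENNReal
open Real

noncomputable section

def signedRpow (r t : ℝ) : ℝ := Real.sign t * |t| ^ r

lemma signedRpow_of_nonneg {r t : ℝ} (ht : 0 ≤ t) (hr : r ≠ 0) : signedRpow r t = t ^ r := by
  rcases ht.eq_or_lt with rfl | ht
  · simp [signedRpow, zero_rpow hr]
  · rw [signedRpow, sign_of_pos ht, abs_of_pos ht, one_mul]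

lemma signedRpow_neg (r t : ℝ) : signedRpow r (-t) = -signedRpow r t := by
  simp [signedRpow, Real.sign_neg]

lemma abs_signedRpow {r : ℝ} (hr : r ≠ 0) (t : ℝ) : |signedRpow r t| = |t| ^ r := by
  rcases le_total 0 t with ht | ht
  · rw [signedRpow_of_nonneg ht hr, abs_of_nonneg ht, abs_of_nonneg (rpow_nonneg ht r)]
  · rw [← neg_neg t, signedRpow_neg, abs_neg, signedRpow_of_nonneg (neg_nonneg.2 ht) hr, abs_neg,
      abs_of_nonneg (neg_nonneg.2 ht), abs_of_nonneg (rpow_nonneg (neg_nonneg.2 ht) r)]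

lemma abs_signedRpow_div_rpow {P Q : ℝ} (hP : P ≠ 0) (hQ : Q ≠ 0) (t : ℝ) :
    |signedRpow (P / Q) t| ^ Q = |t| ^ P := by
  rw [abs_signedRpow (div_ne_zero hP hQ), ← rpow_mul (abs_nonneg t), div_mul_cancel₀ P hQ]

lemma sign_signedRpow (r t : ℝ) : Real.sign (signedRpow r t) = Real.sign t := by
  rcases lt_trichotomy t 0 with ht | rfl | ht
  · rw [signedRpow, sign_of_neg ht, sign_of_neg]
    simpa using rpow_pos_of_pos (abs_pos.2 ht.ne) r
  · simp [signedRpow]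
  · rw [signedRpow, sign_of_pos ht, one_mul, sign_of_pos (rpow_pos_of_pos (abs_pos.2 ht.ne') r)]

lemma signedRpow_signedRpow {r : ℝ} (hr : r ≠ 0) (s t : ℝ) :
    signedRpow s (signedRpow r t) = signedRpow (r * s) t := by
  rw [signedRpow, sign_signedRpow, abs_signedRpow hr, ← rpow_mul (abs_nonneg t),
    signedRpow]

lemma signedRpow_one (t : ℝ) : signedRpow 1 t = t := by
  rcases le_total 0 t with ht | ht
  · rw [signedRpow_of_nonneg ht one_ne_zero, rpow_one]
  · rw [← neg_neg t, signedRpow_neg, signedRpow_of_nonneg (neg_nonneg.2 ht) one_ne_zero, rpow_one]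

lemma rpow_sub_rpow_le_mul_rpow_sub_one {a b s : ℝ} (hs : 1 ≤ s) (hb : 0 ≤ b) (hba : b ≤ a) :
    a ^ s - b ^ s ≤ s * (a - b) * a ^ (s - 1) := by
  rcases (hb.trans hba).eq_or_lt with rfl | ha
  · obtain rfl : b = 0 := le_antisymm hba hb
    simp
  have bernoulli := one_add_mul_self_le_rpow_one_add (s := b / a - 1)
    (by linarith [div_nonneg hb ha.le]) hs
  have hmul : s * (b / a - 1) * a ^ s = -(s * (a - b) * (a ^ s / a)) := by field_simp; ring
  rw [add_sub_cancel, div_rpow hb ha.le, le_div_iff₀ (rpow_pos_of_pos ha s), add_mul, one_mul,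
    hmul] at bernoulli
  rw [rpow_sub_one ha.ne']
  linarith

lemma abs_signedRpow_sub_le_of_le_one {r : ℝ} (hr0 : 0 < r) (hr1 : r ≤ 1) (a b : ℝ) :
    |signedRpow r a - signedRpow r b| ≤ 2 * |a - b| ^ r := by
  wlog hba : |b| ≤ |a| generalizing a b with H
  · simpa only [abs_sub_comm] using H b a (le_of_not_ge hba)
  wlog ha : 0 ≤ a generalizing a b with H
  · simpa only [signedRpow_neg, neg_sub_neg, abs_sub_comm, abs_neg, sub_neg_eq_add,
      neg_add_eq_sub] using H (-a) (-b) (by simpa using hba) (by linarith)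
  rw [abs_of_nonneg ha] at hba
  have hr : r ≠ 0 := hr0.ne'
  rcases le_total 0 b with hb | hb
  · have hbr : b ^ r ≤ a ^ r := rpow_le_rpow hb (le_of_abs_le hba) hr0.le
    have hsub := rpow_add_le_add_rpow (sub_nonneg.2 (le_of_abs_le hba)) hb hr0.le hr1
    rw [sub_add_cancel] at hsub
    rw [signedRpow_of_nonneg ha hr, signedRpow_of_nonneg hb hr, abs_of_nonneg (sub_nonneg.2 hbr),
      abs_of_nonneg (sub_nonneg.2 (le_of_abs_le hba))]
    linarith [rpow_nonneg (sub_nonneg.2 (le_of_abs_le hba)) r]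
  · rw [signedRpow_of_nonneg ha hr, ← neg_neg b, signedRpow_neg,
      signedRpow_of_nonneg (neg_nonneg.2 hb) hr, sub_neg_eq_add, sub_neg_eq_add,
      abs_of_nonneg (add_nonneg (rpow_nonneg ha r) (rpow_nonneg (neg_nonneg.2 hb) r)),
      abs_of_nonneg (by linarith)]
    have h1 : a ^ r ≤ (a + -b) ^ r := rpow_le_rpow ha (by linarith) hr0.le
    have h2 : (-b) ^ r ≤ (a + -b) ^ r := rpow_le_rpow (by linarith) (by linarith) hr0.le
    linarith

lemma abs_signedRpow_sub_le_of_one_le {s : ℝ} (hs : 1 ≤ s) (a b : ℝ) :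
    |signedRpow s a - signedRpow s b| ≤ s * |a - b| * max |a| |b| ^ (s - 1) := by
  wlog hba : |b| ≤ |a| generalizing a b with H
  · simpa only [abs_sub_comm, max_comm] using H b a (le_of_not_ge hba)
  wlog ha : 0 ≤ a generalizing a b with H
  · simpa only [signedRpow_neg, neg_sub_neg, abs_sub_comm, abs_neg, sub_neg_eq_add,
      neg_add_eq_sub] using H (-a) (-b) (by simpa using hba) (by linarith)
  rw [max_eq_left hba, abs_of_nonneg ha]
  rw [abs_of_nonneg ha] at hba
  have hs0 : s ≠ 0 := by positivity
  rcases le_total 0 b with hb | hb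
  · have hsb : b ^ s ≤ a ^ s := rpow_le_rpow hb (le_of_abs_le hba) (by positivity)
    rw [signedRpow_of_nonneg ha hs0, signedRpow_of_nonneg hb hs0, abs_of_nonneg (sub_nonneg.2 hsb),
      abs_of_nonneg (sub_nonneg.2 (le_of_abs_le hba))]
    exact rpow_sub_rpow_le_mul_rpow_sub_one hs hb (le_of_abs_le hba)
  · rw [signedRpow_of_nonneg ha hs0, ← neg_neg b, signedRpow_neg,
      signedRpow_of_nonneg (neg_nonneg.2 hb) hs0, sub_neg_eq_add, sub_neg_eq_add,
      abs_of_nonneg (add_nonneg (rpow_nonneg ha s) (rpow_nonneg (neg_nonneg.2 hb) s)),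
      abs_of_nonneg (by linarith)]
    have hpow : ∀ c : ℝ, 0 ≤ c → c ^ s = c * c ^ (s - 1) := fun c hc => by
      rw [← rpow_one_add' hc (by simpa using hs0), add_sub_cancel]
    have hb' : (-b) ^ (s - 1) ≤ a ^ (s - 1) :=
      rpow_le_rpow (neg_nonneg.2 hb) (by linarith [neg_abs_le b]) (by linarith)
    have ha' : 0 ≤ a ^ (s - 1) := rpow_nonneg ha _
    rw [hpow a ha, hpow (-b) (neg_nonneg.2 hb)]
    nlinarith [mul_le_mul_of_nonneg_left hb' (neg_nonneg.2 hb),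
      mul_nonneg (mul_nonneg (sub_nonneg.2 hs) (by linarith : 0 ≤ a + -b)) ha']

section MazurMap

variable {ι : Type*} {p q : ℝ≥0∞}

lemma summable_max_abs_rpow_and_tsum_le (hp : 0 < p.toReal) (x y : lp (fun _ : ι => ℝ) p) :
    Summable (fun i => max |x i| |y i| ^ p.toReal) ∧
      ∑' i, max |x i| |y i| ^ p.toReal ≤ ‖x‖ ^ p.toReal + ‖y‖ ^ p.toReal := by
  have hle : ∀ i, max |x i| |y i| ^ p.toReal ≤ ‖x i‖ ^ p.toReal + ‖y i‖ ^ p.toReal := fun i => by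
    rw [norm_eq_abs, norm_eq_abs]
    rcases le_total |x i| |y i| with h | h
    · rw [max_eq_right h]; linarith [rpow_nonneg (abs_nonneg (x i)) p.toReal]
    · rw [max_eq_left h]; linarith [rpow_nonneg (abs_nonneg (y i)) p.toReal]
  have hx := (lp.memℓp x).summable hp
  have hy := (lp.memℓp y).summable hp
  have hxy := hx.add hy
  have hsum := Summable.of_nonneg_of_le (fun i => rpow_nonneg (le_max_of_le_left (abs_nonneg _)) _)
    hle hxy
  refine ⟨hsum, ?_⟩
  rw [lp.norm_rpow_eq_tsum hp, lp.norm_rpow_eq_tsum hp, ← hx.tsum_add hy]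
  exact hsum.tsum_le_tsum hle hxy

lemma summable_and_tsum_abs_sub_mul_max_rpow_le (hp : 0 < p.toReal) {Q : ℝ} (hQ : 0 < Q)
    (hQp : Q < p.toReal) (x y : lp (fun _ : ι => ℝ) p) :
    Summable (fun i => (|x i - y i| * max |x i| |y i| ^ (p.toReal / Q - 1)) ^ Q) ∧
      ∑' i, (|x i - y i| * max |x i| |y i| ^ (p.toReal / Q - 1)) ^ Q ≤
        ‖x - y‖ ^ Q * (‖x‖ ^ p.toReal + ‖y‖ ^ p.toReal) ^ (1 - Q / p.toReal) := by
  obtain ⟨hm_sum, hm_tsum⟩ := summable_max_abs_rpow_and_tsum_le hp x y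
  set P := p.toReal
  set m : ι → ℝ := fun i => max |x i| |y i|
  set R := (Q⁻¹ - P⁻¹)⁻¹
  have hR : 0 < R := inv_pos.2 (sub_pos.2 (inv_strictAnti₀ hQ hQp))
  have hm : ∀ i, 0 ≤ m i := fun i => le_max_of_le_left (abs_nonneg _)
  have hmR : ∀ i, (m i ^ (P / Q - 1)) ^ R = m i ^ P := fun i => by
    rw [← rpow_mul (hm i)]
    congr 1
    simp only [R]
    field_simp
    exact div_self (sub_ne_zero.2 hQp.ne')
  obtain ⟨hsum, hHolder⟩ := summable_and_Lr_rpow_le_Lp_mul_Lq_tsum_of_nonneg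
    (⟨by simp [R], hp, hR⟩ : P.HolderTriple R Q)
    (f := fun i => |x i - y i|) (g := fun i => m i ^ (P / Q - 1)) (fun i => abs_nonneg _)
    (fun i => rpow_nonneg (hm i) _) ((lp.memℓp (x - y)).summable hp)
    (by simpa only [hmR] using hm_sum)
  have hdiff : ∑' i, |x i - y i| ^ P = ‖x - y‖ ^ P := (lp.norm_rpow_eq_tsum hp (x - y)).symm
  have hQR : Q / R = 1 - Q / P := by
    rw [div_inv_eq_mul, mul_sub, mul_inv_cancel₀ hQ.ne', div_eq_mul_inv]
  refine ⟨hsum, hHolder.trans ?_⟩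
  rw [tsum_congr hmR, hdiff, ← rpow_mul (lp.norm_nonneg' _), mul_div_cancel₀ _ hp.ne', hQR]
  exact mul_le_mul_of_nonneg_left (rpow_le_rpow (tsum_nonneg fun i => rpow_nonneg (hm i) _)
    hm_tsum (sub_nonneg.2 ((div_le_one hp).2 hQp.le))) (rpow_nonneg (lp.norm_nonneg' _) _)

lemma memℓp_signedRpow (hp : 0 < p.toReal) (hq : 0 < q.toReal) (x : lp (fun _ : ι => ℝ) p) :
    Memℓp (fun i => signedRpow (p.toReal / q.toReal) (x i)) q :=
  memℓp_gen <| ((lp.memℓp x).summable hp).congr fun i => by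
    simp only [norm_eq_abs, abs_signedRpow_div_rpow hp.ne' hq.ne']

def mazurMap (hp : 0 < p.toReal) (hq : 0 < q.toReal) (x : lp (fun _ : ι => ℝ) p) :
    lp (fun _ : ι => ℝ) q :=
  ⟨fun i => signedRpow (p.toReal / q.toReal) (x i), memℓp_signedRpow hp hq x⟩

variable (hp : 0 < p.toReal) (hq : 0 < q.toReal)

@[simp]
lemma mazurMap_apply (x : lp (fun _ : ι => ℝ) p) (i : ι) :
    mazurMap hp hq x i = signedRpow (p.toReal / q.toReal) (x i) := rfl

lemma norm_mazurMap_rpow (x : lp (fun _ : ι => ℝ) p) :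
    ‖mazurMap hp hq x‖ ^ q.toReal = ‖x‖ ^ p.toReal := by
  simp only [lp.norm_rpow_eq_tsum hp, lp.norm_rpow_eq_tsum hq, mazurMap_apply, norm_eq_abs,
    abs_signedRpow_div_rpow hp.ne' hq.ne']

lemma norm_mazurMap (x : lp (fun _ : ι => ℝ) p) :
    ‖mazurMap hp hq x‖ = ‖x‖ ^ (p.toReal / q.toReal) := by
  rw [← Real.rpow_left_inj (lp.norm_nonneg' _) (rpow_nonneg (lp.norm_nonneg' _) _) hq.ne',
    norm_mazurMap_rpow, ← rpow_mul (lp.norm_nonneg' _), div_mul_cancel₀ _ hq.ne']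

lemma mazurMap_mazurMap (x : lp (fun _ : ι => ℝ) p) : mazurMap hq hp (mazurMap hp hq x) = x := by
  ext i
  rw [mazurMap_apply, mazurMap_apply, signedRpow_signedRpow (by positivity),
    div_mul_div_cancel₀ hq.ne', div_self hp.ne', signedRpow_one]

lemma norm_mazurMap_sub_le_of_le (hpq : p.toReal ≤ q.toReal) (x y : lp (fun _ : ι => ℝ) p) :
    ‖mazurMap hp hq x - mazurMap hp hq y‖ ≤ 2 * ‖x - y‖ ^ (p.toReal / q.toReal) := by
  set r := p.toReal / q.toReal
  have hr : 0 < r := by positivity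
  have hr1 : r ≤ 1 := (div_le_one hq).2 hpq
  rw [← Real.rpow_le_rpow_iff (lp.norm_nonneg' _)
      (mul_nonneg zero_le_two (rpow_nonneg (lp.norm_nonneg' _) _)) hq,
    mul_rpow zero_le_two (rpow_nonneg (lp.norm_nonneg' _) _), ← rpow_mul (lp.norm_nonneg' _),
    div_mul_cancel₀ _ hq.ne', lp.norm_rpow_eq_tsum hq, lp.norm_rpow_eq_tsum hp, ← tsum_mul_left]
  refine Summable.tsum_le_tsum (fun i => ?_) ((lp.memℓp _).summable hq)
    (((lp.memℓp _).summable hp).mul_left _)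
  simp only [lp.coeFn_sub, Pi.sub_apply, mazurMap_apply, norm_eq_abs]
  calc |signedRpow r (x i) - signedRpow r (y i)| ^ q.toReal
      ≤ (2 * |x i - y i| ^ r) ^ q.toReal :=
        rpow_le_rpow (abs_nonneg _) (abs_signedRpow_sub_le_of_le_one hr hr1 _ _) hq.le
    _ = 2 ^ q.toReal * |x i - y i| ^ p.toReal := by
        rw [mul_rpow zero_le_two (rpow_nonneg (abs_nonneg _) _), ← rpow_mul (abs_nonneg _),
          div_mul_cancel₀ _ hq.ne']

lemma norm_mazurMap_sub_le_of_lt (hqp : q.toReal < p.toReal) (x y : lp (fun _ : ι => ℝ) p) :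
    ‖mazurMap hp hq x - mazurMap hp hq y‖ ≤ p.toReal / q.toReal *
      (‖x‖ ^ p.toReal + ‖y‖ ^ p.toReal) ^ (q.toReal⁻¹ - p.toReal⁻¹) * ‖x - y‖ := by
  obtain ⟨hsum, hHolder⟩ := summable_and_tsum_abs_sub_mul_max_rpow_le hp hq hqp x y
  set P := p.toReal
  set Q := q.toReal
  set s := P / Q
  set K := ‖x‖ ^ P + ‖y‖ ^ P
  have hK : 0 ≤ K :=
    add_nonneg (rpow_nonneg (lp.norm_nonneg' _) _) (rpow_nonneg (lp.norm_nonneg' _) _)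
  have hpt : ∀ i, ‖(mazurMap hp hq x - mazurMap hp hq y) i‖ ^ Q ≤
      s ^ Q * (|x i - y i| * max |x i| |y i| ^ (s - 1)) ^ Q := fun i => by
    rw [← mul_rpow (by positivity)
      (mul_nonneg (abs_nonneg _) (rpow_nonneg (le_max_of_le_left (abs_nonneg _)) _)), ← mul_assoc]
    exact rpow_le_rpow (norm_nonneg _)
      (abs_signedRpow_sub_le_of_one_le ((one_le_div hq).2 hqp.le) _ _) hq.le
  rw [← Real.rpow_le_rpow_iff (lp.norm_nonneg' _)
    (mul_nonneg (mul_nonneg (by positivity) (rpow_nonneg hK _)) (lp.norm_nonneg' _)) hq]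
  calc ‖mazurMap hp hq x - mazurMap hp hq y‖ ^ Q
      = ∑' i, ‖(mazurMap hp hq x - mazurMap hp hq y) i‖ ^ Q := lp.norm_rpow_eq_tsum hq _
    _ ≤ ∑' i, s ^ Q * (|x i - y i| * max |x i| |y i| ^ (s - 1)) ^ Q :=
        ((lp.memℓp _).summable hq).tsum_le_tsum hpt (hsum.mul_left _)
    _ = s ^ Q * ∑' i, (|x i - y i| * max |x i| |y i| ^ (s - 1)) ^ Q := tsum_mul_left
    _ ≤ s ^ Q * (‖x - y‖ ^ Q * K ^ (1 - Q / P)) := by gcongr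
    _ = (s * K ^ (Q⁻¹ - P⁻¹) * ‖x - y‖) ^ Q := by
        rw [mul_rpow (mul_nonneg (by positivity) (rpow_nonneg hK _)) (lp.norm_nonneg' _),
          mul_rpow (by positivity) (rpow_nonneg hK _), ← rpow_mul hK,
          sub_mul, inv_mul_cancel₀ hq.ne', inv_mul_eq_div]
        ring

end MazurMap

lemma uniformContinuous_of_dist_le_mul_rpow {X Y : Type*} [PseudoMetricSpace X]
    [PseudoMetricSpace Y] {f : X → Y} {C r : ℝ} (hr : 0 < r)
    (hf : ∀ x y, dist (f x) (f y) ≤ C * dist x y ^ r) : UniformContinuous f := by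
  rw [Metric.uniformContinuous_iff]
  intro ε hε
  have hC : 0 < max C 1 := lt_max_of_lt_right one_pos
  refine ⟨(ε / max C 1) ^ r⁻¹, by positivity, fun x y hxy => ?_⟩
  have hδ : dist x y ^ r < ε / max C 1 := by
    simpa [rpow_inv_rpow (div_pos hε hC).le hr.ne'] using
      rpow_lt_rpow dist_nonneg hxy hr
  calc dist (f x) (f y) ≤ C * dist x y ^ r := hf x y
    _ ≤ max C 1 * dist x y ^ r := by gcongr; exact le_max_left C 1
    _ < max C 1 * (ε / max C 1) := by gcongr
    _ = ε := mul_div_cancel₀ ε hC.ne'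

section Sphere

variable {ι : Type*} {p q : ℝ≥0∞} [Fact (1 ≤ p)] [Fact (1 ≤ q)]

def sphereMazurMap (hp : 0 < p.toReal) (hq : 0 < q.toReal) :
    Metric.sphere (0 : lp (fun _ : ι => ℝ) p) 1 → Metric.sphere (0 : lp (fun _ : ι => ℝ) q) 1 :=
  fun x => ⟨mazurMap hp hq x, by
    rw [mem_sphere_zero_iff_norm, norm_mazurMap, mem_sphere_zero_iff_norm.1 x.2, one_rpow]⟩

lemma uniformContinuous_sphereMazurMap (hp : 0 < p.toReal) (hq : 0 < q.toReal) :
    UniformContinuous (sphereMazurMap (ι := ι) hp hq) := by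
  rcases le_or_gt p.toReal q.toReal with hpq | hqp
  · refine uniformContinuous_of_dist_le_mul_rpow (C := 2) (div_pos hp hq) fun x y => ?_
    rw [Subtype.dist_eq, Subtype.dist_eq, dist_eq_norm, dist_eq_norm]
    exact norm_mazurMap_sub_le_of_le hp hq hpq x.1 y.1
  · refine uniformContinuous_of_dist_le_mul_rpow
      (C := p.toReal / q.toReal * 2 ^ (q.toReal⁻¹ - p.toReal⁻¹)) one_pos fun x y => ?_
    rw [Subtype.dist_eq, Subtype.dist_eq, dist_eq_norm, dist_eq_norm]
    have := norm_mazurMap_sub_le_of_lt hp hq hqp x.1 y.1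
    rwa [mem_sphere_zero_iff_norm.1 x.2, mem_sphere_zero_iff_norm.1 y.2, one_rpow,
      one_add_one_eq_two, ← rpow_one ‖x.1 - y.1‖] at this

def sphereMazurUniformEquiv (hp : 0 < p.toReal) (hq : 0 < q.toReal) :
    Metric.sphere (0 : lp (fun _ : ι => ℝ) p) 1 ≃ᵤ Metric.sphere (0 : lp (fun _ : ι => ℝ) q) 1 where
  toFun := sphereMazurMap hp hq
  invFun := sphereMazurMap hq hp
  left_inv x := Subtype.ext (mazurMap_mazurMap hp hq x.1)
  right_inv y := Subtype.ext (mazurMap_mazurMap hq hp y.1)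
  uniformContinuous_toFun := uniformContinuous_sphereMazurMap hp hq
  uniformContinuous_invFun := uniformContinuous_sphereMazurMap hq hp

end Sphere

/-- For all `1 ≤ p, q < ∞` the unit spheres of `ℓ_p` and `ℓ_q` are uniformly homeomorphic. -/
theorem lp_spheres_uniformly_homeomorphic (p q : ℝ≥0∞)
    (hp : 1 ≤ p) (hp' : p ≠ ⊤) (hq : 1 ≤ q) (hq' : q ≠ ⊤)
    [Fact (1 ≤ p)] [Fact (1 ≤ q)] :
    ∃ (F : Metric.sphere (0 : lp (fun _ : ℕ => ℝ) p) 1 →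
          Metric.sphere (0 : lp (fun _ : ℕ => ℝ) q) 1)
      (G : Metric.sphere (0 : lp (fun _ : ℕ => ℝ) q) 1 →
          Metric.sphere (0 : lp (fun _ : ℕ => ℝ) p) 1),
      Function.LeftInverse G F ∧ Function.RightInverse G F ∧
      UniformContinuous F ∧ UniformContinuous G := by
  let e := sphereMazurUniformEquiv (ι := ℕ) (ENNReal.toReal_pos (one_pos.trans_le hp).ne' hp')
    (ENNReal.toReal_pos (one_pos.trans_le hq).ne' hq')
  exact ⟨e, e.symm, e.left_inv, e.right_inv, e.uniformContinuous, e.symm.uniformContinuous⟩
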